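/- arXiv:2112.15194 — 5 statements merged into one kernel-verified Lean document; each statement's English description precedes it below -/
import Mathlib

section
/- For positive integers x, y, z, the matrix M₁ = A^{z-1}·V·B^{y-1}·T·V·B^{x-1}·T equals [[1−y, −x−y+xy],[1+z−yz, 1−x−xz−yz+xyz]], where A = [[1,0],[1,1]], B = [[1,1],[0,1]], V = [[1,0],[1,-1]], T = [[-1,1],[0,1]]. -/
section Unipotent

variable {R : Type*} [Semiring R]

theorem Matrix.lowerUnipotent_fin_two_pow (c : R) (n : ℕ) :
    !![1, 0; c, 1] ^ n = !![1, 0; n * c, 1] := by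
  induction n with
  | zero => simp [Matrix.one_fin_two]
  | succ n ih =>
    rw [pow_succ, ih, Matrix.mul_fin_two]
    simp [add_mul]

theorem Matrix.upperUnipotent_fin_two_pow (c : R) (n : ℕ) :
    !![1, c; 0, 1] ^ n = !![1, n * c; 0, 1] := by
  induction n with
  | zero => simp [Matrix.one_fin_two]
  | succ n ih =>
    rw [pow_succ, ih, Matrix.mul_fin_two]
    simp [add_mul, add_comm]

end Unipotent

theorem M1_formula (x y z : ℕ) (hx : 0 < x) (hy : 0 < y) (hz : 0 < z) :
    let A : Matrix (Fin 2) (Fin 2) ℤ := !![1, 0; 1, 1]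
    let B : Matrix (Fin 2) (Fin 2) ℤ := !![1, 1; 0, 1]
    let V : Matrix (Fin 2) (Fin 2) ℤ := !![1, 0; 1, -1]
    let T : Matrix (Fin 2) (Fin 2) ℤ := !![-1, 1; 0, 1]
    A ^ (z - 1) * V * B ^ (y - 1) * T * V * B ^ (x - 1) * T =
      !![1 - (y : ℤ), -(x : ℤ) - y + x * y;
         1 + (z : ℤ) - y * z, 1 - (x : ℤ) - x * z - y * z + x * y * z] := by
  intro A B V T
  obtain ⟨a, rfl⟩ := Nat.exists_eq_succ_of_ne_zero hx.ne'
  obtain ⟨b, rfl⟩ := Nat.exists_eq_succ_of_ne_zero hy.ne'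
  obtain ⟨c, rfl⟩ := Nat.exists_eq_succ_of_ne_zero hz.ne'
  simp only [A, B, V, T, Nat.succ_sub_one, Matrix.lowerUnipotent_fin_two_pow,
    Matrix.upperUnipotent_fin_two_pow, Matrix.mul_fin_two]
  push_cast
  refine congrArg Matrix.of (Matrix.vec2_eq (Matrix.vec2_eq ?_ ?_) (Matrix.vec2_eq ?_ ?_)) <;> ring
end

section
/- For integers x ≥ 3, y ≥ 3, z ≥ 2, the matrix A⁻¹·M₁·A has all entries nonnegative, where M₁ = [[1−y, −x−y+xy],[1+z−yz, 1−x−xz−yz+xyz]] and A = [[1,0],[1,1]]. -/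
theorem M1_conj_nonneg (x y z : ℤ) (hx : 3 ≤ x) (hy : 3 ≤ y) (hz : 2 ≤ z) :
    let A : Matrix (Fin 2) (Fin 2) ℤ := !![1, 0; 1, 1]
    let Ainv : Matrix (Fin 2) (Fin 2) ℤ := !![1, 0; -1, 1]
    let M1 : Matrix (Fin 2) (Fin 2) ℤ :=
      !![1 - y, -x - y + x * y;
         1 + z - y * z, 1 - x - x * z - y * z + x * y * z]
    ∀ i j, 0 ≤ (Ainv * M1 * A) i j := by
  intro A Ainv M1 i j
  fin_cases i <;> fin_cases j <;>
    simp [A, Ainv, M1, Matrix.mul_apply, Fin.sum_univ_two] <;>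
    nlinarith [mul_nonneg (by linarith : (0:ℤ) ≤ x - 2) (by linarith : (0:ℤ) ≤ y - 2),
      mul_nonneg (mul_nonneg (by linarith : (0:ℤ) ≤ x - 2) (by linarith : (0:ℤ) ≤ y - 2)) (by linarith : (0:ℤ) ≤ z - 1),
      mul_nonneg (by linarith : (0:ℤ) ≤ y - 1) (by linarith : (0:ℤ) ≤ z - 1)]
end

section
/- Let α ∈ (0,1) be irrational, n = ⌊1/α⌋, and define the 4-tuple sequence by (x₀,y₀,z₀,w₀) = (1,−n,0,1) and the update rule (x_{k+1},y_{k+1},z_{k+1},w_{k+1}) = (z_k−x_k, w_k−y_k, x_k, y_k) if (2y_k−w_k)α > z_k−2x_k and (x_k, y_k, z_k−x_k, w_k−y_k) otherwise. Then for every k, x_k + y_k·α < z_k + w_k·α and both x_k + y_k·α and z_k + w_k·α are positive. -/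
open Classical in
/-- The 4-tuple sequence of maximal splittings, starting from `(1, -n, 0, 1)`. -/
noncomputable def fourTupleSeq (α : ℝ) (n : ℤ) : ℕ → ℤ × ℤ × ℤ × ℤ
  | 0 => (1, -n, 0, 1)
  | k + 1 =>
    let p := fourTupleSeq α n k
    let x := p.1; let y := p.2.1; let z := p.2.2.1; let w := p.2.2.2
    if ((2 * y - w : ℤ) : ℝ) * α > ((z - 2 * x : ℤ) : ℝ) then
      (z - x, w - y, x, y)
    else
      (x, y, z - x, w - y)

lemma intMul_ne (α : ℝ) (hirr : Irrational α) {a b : ℤ} (hb : b ≠ 0) :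
    ((a : ℝ)) ≠ b * α := by
  intro h
  have hb' : (b : ℝ) ≠ 0 := Int.cast_ne_zero.mpr hb
  apply hirr
  refine ⟨(a : ℚ) / (b : ℚ), ?_⟩
  push_cast
  rw [h]
  field_simp

lemma fourTupleSeq_det (α : ℝ) (n : ℤ) (k : ℕ) :
    (fourTupleSeq α n k).1 * (fourTupleSeq α n k).2.2.2 -
      (fourTupleSeq α n k).2.1 * (fourTupleSeq α n k).2.2.1 = 1 ∨
    (fourTupleSeq α n k).1 * (fourTupleSeq α n k).2.2.2 -
      (fourTupleSeq α n k).2.1 * (fourTupleSeq α n k).2.2.1 = -1 := by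
  induction k with
  | zero => left; simp [fourTupleSeq]
  | succ k ih =>
    show (fourTupleSeq α n (k+1)).1 * _ - _ = 1 ∨ _
    rw [fourTupleSeq]
    split
    · rcases ih with h | h
      · right; simp only; linarith [h]
      · left; simp only; linarith [h]
    · rcases ih with h | h
      · left; simp only; linarith [h]
      · right; simp only; linarith [h]

theorem fourTupleSeq_pos_and_lt (α : ℝ) (hirr : Irrational α)
    (hα : α ∈ Set.Ioo (0 : ℝ) 1) (n : ℤ) (hn : n = ⌊1 / α⌋) (k : ℕ) :
    let p := fourTupleSeq α n k
    let x := p.1; let y := p.2.1; let z := p.2.2.1; let w := p.2.2.2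
    ((x : ℝ) + y * α < (z : ℝ) + w * α) ∧
      0 < (x : ℝ) + y * α ∧ 0 < (z : ℝ) + w * α := by
  obtain ⟨hα0, hα1⟩ := hα
  induction k with
  | zero =>
    simp only [fourTupleSeq]
    push_cast
    have h1 : (n : ℝ) ≤ 1 / α := by rw [hn]; exact Int.floor_le _
    have h2 : 1 / α < (n : ℝ) + 1 := by
      rw [hn]; push_cast; exact Int.lt_floor_add_one _
    have hna : (n : ℝ) * α ≤ 1 := by
      calc (n : ℝ) * α ≤ (1 / α) * α := by nlinarith
        _ = 1 := by field_simp
    have hna' : (n : ℝ) * α ≠ 1 := by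
      intro h
      have hn0 : n ≠ 0 := by
        intro h0; rw [h0] at h; simp at h
      exact intMul_ne α hirr hn0 (a := 1) (by push_cast; linarith)
    have h3 : 1 < ((n : ℝ) + 1) * α := by
      have := mul_lt_mul_of_pos_right h2 hα0
      rw [one_div, inv_mul_cancel₀ (ne_of_gt hα0)] at this
      linarith
    refine ⟨?_, ?_, ?_⟩
    · nlinarith [lt_of_le_of_ne hna hna']
    · nlinarith [lt_of_le_of_ne hna hna']
    · linarith
  | succ k ih =>
    obtain ⟨hlt, hxp, hzp⟩ := ih
    have hdet := fourTupleSeq_det α n k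
    set p := fourTupleSeq α n k with hp
    obtain ⟨x, y, z, w⟩ := p
    simp only at hlt hxp hzp hdet ⊢
    show (↑(fourTupleSeq α n (k+1)).1 : ℝ) + _ * α < _ ∧ _
    rw [fourTupleSeq, ← hp]
    simp only
    split
    · rename_i hcond
      push_cast at hcond ⊢
      refine ⟨by linarith, by linarith, hxp⟩
    · rename_i hcond
      push_cast at hcond ⊢
      -- ¬((2y - w)α > z - 2x) means 2x + 2yα ≤ z + wα
      have hle : 2 * (x : ℝ) + 2 * y * α ≤ (z : ℝ) + w * α := by
        push_neg at hcond; linarith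
      have hne : 2 * (x : ℝ) + 2 * y * α ≠ (z : ℝ) + w * α := by
        intro h
        by_cases hw : 2 * y - w = 0
        · have hwr : (w : ℝ) = 2 * y := by
            have : ((2 * y - w : ℤ) : ℝ) = 0 := by exact_mod_cast congrArg Int.cast hw
            push_cast at this; linarith
          have hzr : (z : ℝ) = 2 * x := by rw [hwr] at h; linarith
          have hz : z = 2 * x := by exact_mod_cast hzr
          have hw2 : w = 2 * y := by exact_mod_cast hwr
          rcases hdet with hd | hd <;> rw [hz, hw2] at hd <;> ring_nf at hd <;> omega
        · exact intMul_ne α hirr hw (a := z - 2 * x) (by push_cast; linarith)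
      have h2lt : 2 * (x : ℝ) + 2 * y * α < (z : ℝ) + w * α := lt_of_le_of_ne hle hne
      exact ⟨by linarith, hxp, by linarith⟩
end

section
/- Let n ≥ 1 be an integer and define T inductively on finite binary strings: T(empty) = [[1,0],[−n,1]]; if T(s) = [[x,z],[y,w]] with x > 0 then T(s·0) = [[x, z−x],[y, w−y]] and T(s·1) = [[z−x, x],[w−y, y]], while if x < 0 then T(s·0) = [[z−x, x],[w−y, y]] and T(s·1) = [[x, z−x],[y, w−y]]. Then for every binary string s, T(s) has the form ε·[[a, −b],[−an−c, bn+d]] for some ε ∈ {1,−1}, integer a > 0, and integers b, c, d ≥ 0 with ad − bc = ε. -/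
/-- One step of the inductive definition of the map `T`, where the bit `b`
records which child of the Farey interval is taken. -/
def fareyStep (b : Bool) (M : Matrix (Fin 2) (Fin 2) ℤ) : Matrix (Fin 2) (Fin 2) ℤ :=
  let x := M 0 0; let z := M 0 1; let y := M 1 0; let w := M 1 1
  if 0 < x then
    if b then !![z - x, x; w - y, y] else !![x, z - x; y, w - y]
  else
    if b then !![x, z - x; y, w - y] else !![z - x, x; w - y, y]

/-- The map `T` on finite binary strings (`b :: s` is the string `s` extended by `b`). -/
def fareyT (n : ℤ) : List Bool → Matrix (Fin 2) (Fin 2) ℤ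
  | [] => !![1, 0; -n, 1]
  | b :: s => fareyStep b (fareyT n s)

theorem fareyT_form (n : ℤ) (hn : 1 ≤ n) (s : List Bool) :
    ∃ (ε a b c d : ℤ), (ε = 1 ∨ ε = -1) ∧ 0 < a ∧ 0 ≤ b ∧ 0 ≤ c ∧ 0 ≤ d ∧
      fareyT n s = ε • !![a, -b; -a * n - c, b * n + d] ∧ a * d - b * c = ε := by
  induction s with
  | nil =>
    refine ⟨1, 1, 0, 0, 1, Or.inl rfl, one_pos, le_refl _, le_refl _, zero_le_one, ?_, by ring⟩
    show (!![1, 0; -n, 1] : Matrix (Fin 2) (Fin 2) ℤ) = _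
    ext i j
    fin_cases i <;> fin_cases j <;> simp <;> ring
  | cons bit s ih =>
    obtain ⟨ε, a, b, c, d, hε, ha, hb, hc, hd, hM, hdet⟩ := ih
    rcases hε with rfl | rfl
    · have hM' : fareyT n s = !![a, -b; -a * n - c, b * n + d] := by
        rw [hM, one_smul]
      have hx : (0 : ℤ) < a := ha
      cases bit
      · refine ⟨1, a, a + b, c, c + d, Or.inl rfl, ha, by linarith, hc, by linarith, ?_, by linarith⟩
        show fareyStep false (fareyT n s) = _
        rw [hM', fareyStep]
        simp only [Matrix.of_apply, Fin.isValue, Matrix.cons_val', Matrix.cons_val_zero, Matrix.cons_val_one,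
          Matrix.head_cons, Matrix.head_fin_const, Matrix.empty_val', Matrix.cons_val_fin_one]
        rw [if_pos hx, if_neg (by simp)]
        ext i j
        fin_cases i <;> fin_cases j <;> simp <;> ring
      · refine ⟨-1, a + b, a, c + d, c, Or.inr rfl, by linarith, le_of_lt ha, by linarith, hc, ?_, by linarith⟩
        show fareyStep true (fareyT n s) = _
        rw [hM', fareyStep]
        simp only [Matrix.of_apply, Fin.isValue, Matrix.cons_val', Matrix.cons_val_zero, Matrix.cons_val_one,
          Matrix.head_cons, Matrix.head_fin_const, Matrix.empty_val', Matrix.cons_val_fin_one]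
        rw [if_pos hx, if_pos (by simp)]
        ext i j
        fin_cases i <;> fin_cases j <;> simp <;> ring
    · have hM' : fareyT n s = !![-a, b; a * n + c, -(b * n + d)] := by
        rw [hM]
        ext i j
        fin_cases i <;> fin_cases j <;> simp <;> ring
      have hx : ¬ (0 : ℤ) < -a := by linarith
      cases bit
      · refine ⟨1, a + b, a, c + d, c, Or.inl rfl, by linarith, le_of_lt ha, by linarith, hc, ?_, by linarith⟩
        show fareyStep false (fareyT n s) = _
        rw [hM', fareyStep]
        simp only [Matrix.of_apply, Fin.isValue, Matrix.cons_val', Matrix.cons_val_zero, Matrix.cons_val_one,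
          Matrix.head_cons, Matrix.head_fin_const, Matrix.empty_val', Matrix.cons_val_fin_one]
        rw [if_neg hx, if_neg (by simp)]
        ext i j
        fin_cases i <;> fin_cases j <;> simp <;> ring
      · refine ⟨-1, a, a + b, c, c + d, Or.inr rfl, ha, by linarith, hc, by linarith, ?_, by linarith⟩
        show fareyStep true (fareyT n s) = _
        rw [hM', fareyStep]
        simp only [Matrix.of_apply, Fin.isValue, Matrix.cons_val', Matrix.cons_val_zero, Matrix.cons_val_one,
          Matrix.head_cons, Matrix.head_fin_const, Matrix.empty_val', Matrix.cons_val_fin_one]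
        rw [if_neg hx, if_pos (by simp)]
        ext i j
        fin_cases i <;> fin_cases j <;> simp <;> ring
end

section
/- Let x, y, z be integers with x ≥ 3, y ≥ 3, z ≥ 2, x ≠ y. Then the braid words σ₁^x σ₂^{-1} σ₁^y σ₂^z and σ₁^x σ₂^z σ₁^y σ₂^{-1} induce the same characteristic polynomial for their transition matrices; concretely, the integer matrices M₈ = A^{z−1}·V·B^y·A·B^{x−1}·T and M₈' = A·B^{y−1}·T·A^{z−1}·V·B^x satisfy det M₈ = det M₈' = 1 and tr M₈ = tr M₈' = −2 − x − y + xz + yz + xyz. -/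
open Matrix

lemma Apow (n : ℕ) : (!![1, 0; 1, 1] : Matrix (Fin 2) (Fin 2) ℤ) ^ n = !![1, 0; (n : ℤ), 1] := by
  induction n with
  | zero => simp [Matrix.one_fin_two]
  | succ k ih =>
    rw [pow_succ, ih]
    simp [Matrix.mul_fin_two]

lemma Bpow (n : ℕ) : (!![1, 1; 0, 1] : Matrix (Fin 2) (Fin 2) ℤ) ^ n = !![1, (n : ℤ); 0, 1] := by
  induction n with
  | zero => simp [Matrix.one_fin_two]
  | succ k ih =>
    rw [pow_succ, ih]
    simp [Matrix.mul_fin_two]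
    ring

theorem M8_M8'_same_char (x y z : ℕ) (hx : 3 ≤ x) (hy : 3 ≤ y) (hz : 2 ≤ z)
    (hxy : x ≠ y) :
    let A : Matrix (Fin 2) (Fin 2) ℤ := !![1, 0; 1, 1]
    let B : Matrix (Fin 2) (Fin 2) ℤ := !![1, 1; 0, 1]
    let V : Matrix (Fin 2) (Fin 2) ℤ := !![1, 0; 1, -1]
    let T : Matrix (Fin 2) (Fin 2) ℤ := !![-1, 1; 0, 1]
    let M8 := A ^ (z - 1) * V * B ^ y * A * B ^ (x - 1) * T
    let M8' := A * B ^ (y - 1) * T * A ^ (z - 1) * V * B ^ x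
    M8.det = 1 ∧ M8'.det = 1 ∧
      M8.trace = -2 - (x : ℤ) - y + x * z + y * z + x * y * z ∧
      M8'.trace = -2 - (x : ℤ) - y + x * z + y * z + x * y * z := by
  intro A B V T M8 M8'
  have hx1 : ((x - 1 : ℕ) : ℤ) = (x : ℤ) - 1 := by
    rw [Nat.cast_sub (by omega)]; simp
  have hy1 : ((y - 1 : ℕ) : ℤ) = (y : ℤ) - 1 := by
    rw [Nat.cast_sub (by omega)]; simp
  have hz1 : ((z - 1 : ℕ) : ℤ) = (z : ℤ) - 1 := by
    rw [Nat.cast_sub (by omega)]; simp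
  have hM8 : M8 = !![1, 0; (z:ℤ)-1, 1] * V * !![1, (y:ℤ); 0, 1] * !![1,0;1,1]
      * !![1, (x:ℤ)-1; 0, 1] * T := by
    show A ^ (z-1) * V * B ^ y * A * B ^ (x-1) * T = _
    rw [show A = !![1,0;1,1] from rfl, show B = !![1,1;0,1] from rfl, Apow, Bpow, Bpow, hz1, hx1]
  have hM8' : M8' = !![1,0;1,1] * !![1, (y:ℤ)-1; 0, 1] * T * !![1, 0; (z:ℤ)-1, 1] * V
      * !![1, (x:ℤ); 0, 1] := by
    show A * B ^ (y-1) * T * A ^ (z-1) * V * B ^ x = _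
    rw [show A = !![1,0;1,1] from rfl, show B = !![1,1;0,1] from rfl, Apow, Bpow, Bpow, hz1, hy1]
  rw [hM8, hM8', show V = !![1,0;1,-1] from rfl, show T = !![-1,1;0,1] from rfl]
  simp only [Matrix.mul_fin_two]
  refine ⟨?_, ?_, ?_, ?_⟩ <;>
    simp [Matrix.det_fin_two_of, Matrix.trace_fin_two] <;> ring
end
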